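/- arXiv:2504.14829 — 9 statements merged into one kernel-verified Lean document; each statement's English description precedes it below -/
import Mathlib

section
/- The intersection of two M-ideals of a ring R is an M-ideal of R. -/
/-- An ideal `J` is an M-ideal if for all nonzero ideals `I₁, I₂` with nonzero
intersection, `J ⊓ I₁ ≠ ⊥` and `J ⊓ I₂ ≠ ⊥` imply `J ⊓ (I₁ ⊓ I₂) ≠ ⊥`. -/
def IsMIdeal {S : Type*} [NonUnitalNonAssocRing S] (J : TwoSidedIdeal S) : Prop :=
  ∀ I₁ I₂ : TwoSidedIdeal S, I₁ ≠ ⊥ → I₂ ≠ ⊥ → I₁ ⊓ I₂ ≠ ⊥ →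
    J ⊓ I₁ ≠ ⊥ → J ⊓ I₂ ≠ ⊥ → J ⊓ (I₁ ⊓ I₂) ≠ ⊥

/-- An ideal `J` is essential if it intersects every nonzero ideal nontrivially. -/
def IsEssentialIdeal {S : Type*} [NonUnitalNonAssocRing S] (J : TwoSidedIdeal S) : Prop :=
  ∀ I : TwoSidedIdeal S, I ≠ ⊥ → J ⊓ I ≠ ⊥

/-- An ideal `I` is relatively irreducible if any two ideals contained in `I` with zero
intersection cannot both be nonzero. -/
def IsRelIrreducible {S : Type*} [NonUnitalNonAssocRing S] (I : TwoSidedIdeal S) : Prop :=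
  ∀ J K : TwoSidedIdeal S, J ≤ I → K ≤ I → J ⊓ K = ⊥ → J = ⊥ ∨ K = ⊥

/-- A minimal ideal: nonzero, and its only subideals are `⊥` and itself. -/
def IsMinimalIdeal {S : Type*} [NonUnitalNonAssocRing S] (I : TwoSidedIdeal S) : Prop :=
  I ≠ ⊥ ∧ ∀ J : TwoSidedIdeal S, J ≤ I → J = ⊥ ∨ J = I

/-- The intersection of two M-ideals is an M-ideal. -/
theorem stmt4 {R : Type*} [Ring R] (J₁ J₂ : TwoSidedIdeal R)
    (h₁ : IsMIdeal J₁) (h₂ : IsMIdeal J₂) : IsMIdeal (J₁ ⊓ J₂) := by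
  intro I₁ I₂ hI₁ hI₂ hI₁₂ hJI₁ hJI₂
  have ne1 : J₂ ⊓ I₁ ≠ ⊥ := fun h => hJI₁ (le_bot_iff.mp (by
    calc J₁ ⊓ J₂ ⊓ I₁ ≤ J₂ ⊓ I₁ := inf_le_inf_right _ inf_le_right
    _ = ⊥ := h))
  have ne2 : J₂ ⊓ I₂ ≠ ⊥ := fun h => hJI₂ (le_bot_iff.mp (by
    calc J₁ ⊓ J₂ ⊓ I₂ ≤ J₂ ⊓ I₂ := inf_le_inf_right _ inf_le_right
    _ = ⊥ := h))
  have key : (J₂ ⊓ I₁) ⊓ (J₂ ⊓ I₂) = J₂ ⊓ (I₁ ⊓ I₂) :=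
    (inf_inf_distrib_left _ _ _).symm
  have h2' : J₂ ⊓ (I₁ ⊓ I₂) ≠ ⊥ := h₂ I₁ I₂ hI₁ hI₂ hI₁₂ ne1 ne2
  have h1' := h₁ (J₂ ⊓ I₁) (J₂ ⊓ I₂) ne1 ne2 (key ▸ h2')
    (by rwa [← inf_assoc]) (by rwa [← inf_assoc])
  rw [key] at h1'
  rwa [inf_assoc]
end

section
/- An ideal I of a ring R is an M-ideal if and only if I is essential or I is relatively irreducible. -/
/-- Modular-law style lemma: if `J ≤ I` and `I ⊓ K = ⊥`, then `I ⊓ (J ⊔ K) ≤ J`. -/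
lemma aux_modular {R : Type*} [Ring R] (I J K : TwoSidedIdeal R)
    (hJ : J ≤ I) (hIK : I ⊓ K = ⊥) : I ⊓ (J ⊔ K) ≤ J := by
  intro x hx
  obtain ⟨hxI, hxJK⟩ := hx
  obtain ⟨a, ha, b, hb, rfl⟩ := TwoSidedIdeal.mem_sup.mp hxJK
  have hbI : b ∈ I := by
    have : (a + b) - a ∈ I := I.sub_mem hxI (hJ ha)
    simpa using this
  have hb0 : b = 0 := by
    have : b ∈ I ⊓ K := ⟨hbI, hb⟩
    rw [hIK] at this
    simpa using this
  simpa [hb0] using ha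

/-- An ideal is an M-ideal iff it is essential or relatively irreducible. -/
theorem stmt6 {R : Type*} [Ring R] (I : TwoSidedIdeal R) :
    IsMIdeal I ↔ IsEssentialIdeal I ∨ IsRelIrreducible I := by
  constructor
  · intro hM
    by_cases hEss : IsEssentialIdeal I
    · exact Or.inl hEss
    · right
      intro J K hJI hKI hJK
      by_contra hcon
      push_neg at hcon
      obtain ⟨hJ, hK⟩ := hcon
      simp only [IsEssentialIdeal, not_forall] at hEss
      obtain ⟨L, hL, hIL⟩ := hEss
      rw [not_ne_iff] at hIL
      have h1 : I ⊓ (J ⊔ L) ≠ ⊥ := fun h => hJ (le_bot_iff.mp (h ▸ le_inf hJI le_sup_left))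
      have h2 : I ⊓ (K ⊔ L) ≠ ⊥ := fun h => hK (le_bot_iff.mp (h ▸ le_inf hKI le_sup_left))
      have h3 : (J ⊔ L) ⊓ (K ⊔ L) ≠ ⊥ := fun h =>
        hL (le_bot_iff.mp (h ▸ le_inf le_sup_right le_sup_right))
      have h4 := hM (J ⊔ L) (K ⊔ L)
        (fun h => hJ (le_bot_iff.mp (h ▸ le_sup_left)))
        (fun h => hK (le_bot_iff.mp (h ▸ le_sup_left))) h3 h1 h2
      apply h4
      rw [le_bot_iff.symm] at hJK ⊢
      calc I ⊓ ((J ⊔ L) ⊓ (K ⊔ L)) ≤ (I ⊓ (J ⊔ L)) ⊓ (I ⊓ (K ⊔ L)) := by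
            exact le_inf (inf_le_inf_left _ inf_le_left) (inf_le_inf_left _ inf_le_right)
        _ ≤ J ⊓ K := inf_le_inf (aux_modular I J L hJI hIL) (aux_modular I K L hKI hIL)
        _ ≤ ⊥ := hJK
  · rintro (hEss | hIrr)
    · intro I₁ I₂ _ _ h12 _ _
      exact hEss (I₁ ⊓ I₂) h12
    · intro I₁ I₂ _ _ _ h1 h2 hcon
      rcases hIrr (I ⊓ I₁) (I ⊓ I₂) inf_le_left inf_le_left (by
        rw [← inf_inf_distrib_left, hcon]) with h | h
      · exact h1 h
      · exact h2 h
end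

section
/- If a ring R has at least two distinct minimal ideals, then the socle of R is an M-ideal if and only if it is essential. -/
/-- The modular law for two-sided ideals. -/
lemma TwoSidedIdeal.modular {S : Type*} [NonUnitalNonAssocRing S]
    {a b c : TwoSidedIdeal S} (h : a ≤ c) : (a ⊔ b) ⊓ c = a ⊔ (b ⊓ c) := by
  refine le_antisymm ?_ (sup_le (le_inf le_sup_left h) (le_inf (le_trans inf_le_left le_sup_right) inf_le_right))
  intro x hx
  obtain ⟨hx1, hx2⟩ := (TwoSidedIdeal.mem_inf _).mp hx
  obtain ⟨y, hy, z, hz, rfl⟩ := TwoSidedIdeal.mem_sup.mp hx1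
  have hz' : z ∈ c := by
    have : (y + z) - y ∈ c := c.sub_mem hx2 (h hy)
    simpa using this
  exact TwoSidedIdeal.mem_sup.mpr ⟨y, hy, z, (TwoSidedIdeal.mem_inf _).mpr ⟨hz, hz'⟩, rfl⟩

/-- If a ring has at least two distinct minimal ideals, then its socle is an M-ideal iff
it is essential. -/
theorem stmt8 {R : Type*} [Ring R]
    (I₁ I₂ : TwoSidedIdeal R) (h₁ : IsMinimalIdeal I₁) (h₂ : IsMinimalIdeal I₂)
    (hne : I₁ ≠ I₂) :
    IsMIdeal (sSup {I : TwoSidedIdeal R | IsMinimalIdeal I}) ↔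
      IsEssentialIdeal (sSup {I : TwoSidedIdeal R | IsMinimalIdeal I}) := by
  set Soc := sSup {I : TwoSidedIdeal R | IsMinimalIdeal I} with hSoc
  have hI₁S : I₁ ≤ Soc := le_sSup h₁
  have hI₂S : I₂ ≤ Soc := le_sSup h₂
  constructor
  · intro hM I hI
    by_contra hSI
    -- case split on whether I₂ ≤ I ⊔ I₁
    by_cases hcase : I₂ ≤ I ⊔ I₁
    · -- derive I₂ ≤ I₁, contradiction
      have hX : I ⊓ (I₁ ⊔ I₂) = ⊥ := by
        have : I ⊓ (I₁ ⊔ I₂) ≤ Soc ⊓ I :=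
          le_inf (le_trans inf_le_right (sup_le hI₁S hI₂S)) inf_le_left
        rw [hSI] at this
        exact le_bot_iff.mp this
      have key : (I₁ ⊔ I) ⊓ (I₁ ⊔ I₂) = I₁ ⊔ (I ⊓ (I₁ ⊔ I₂)) :=
        TwoSidedIdeal.modular le_sup_left
      rw [hX, sup_bot_eq] at key
      have h12 : I₂ ≤ I₁ := by
        have : I₁ ⊔ I₂ ≤ (I₁ ⊔ I) ⊓ (I₁ ⊔ I₂) :=
          le_inf (sup_le le_sup_left (le_trans hcase (sup_comm I I₁ ▸ le_rfl))) le_rfl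
        rw [key] at this
        exact le_trans le_sup_right this
      rcases h₁.2 I₂ h12 with h | h
      · exact h₂.1 h
      · exact hne h.symm
    · -- apply M-ideal property
      have hI₂J : (I ⊔ I₁) ⊓ I₂ = ⊥ := by
        rcases h₂.2 _ inf_le_right with h | h
        · exact h
        · exact absurd (h ▸ inf_le_left) hcase
      have hJK : (I ⊔ I₁) ⊓ (I ⊔ I₂) = I := by
        rw [inf_comm, TwoSidedIdeal.modular (le_sup_left : I ≤ I ⊔ I₁), inf_comm I₂ (I ⊔ I₁), hI₂J,
          sup_bot_eq]
      have := hM (I ⊔ I₁) (I ⊔ I₂)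
        (fun h => hI (le_bot_iff.mp (h ▸ (le_sup_left : I ≤ I ⊔ I₁))))
        (fun h => hI (le_bot_iff.mp (h ▸ (le_sup_left : I ≤ I ⊔ I₂))))
        (by rw [hJK]; exact hI)
        (fun h => h₁.1 (le_bot_iff.mp (h ▸ le_inf hI₁S le_sup_right)))
        (fun h => h₂.1 (le_bot_iff.mp (h ▸ le_inf hI₂S le_sup_right)))
      rw [hJK] at this
      exact this hSI
  · intro hE J K hJ hK hJK _ _
    exact hE (J ⊓ K) hJK
end

section
/- In the ring Z_n with n = p_1^{m_1} ⋯ p_k^{m_k} a product of powers of distinct primes, the ideal generated by p_1^{m'_1} ⋯ p_k^{m'_k} (with 0 ≤ m'_i ≤ m_i) is essential if and only if m'_i < m_i for every i. -/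
section Aux

/-- In `ZMod n`, if `a ∣ n` and `x` lies in the two-sided ideal spanned by `a`,
then `a` divides `x.val`. -/
lemma aux_span_dvd_val {n : ℕ} [NeZero n] {a : ℕ} (han : a ∣ n) (x : ZMod n)
    (hx : x ∈ TwoSidedIdeal.span {(a : ZMod n)}) : a ∣ x.val := by
  let J : TwoSidedIdeal (ZMod n) := TwoSidedIdeal.mk'
    {y : ZMod n | ∃ c : ZMod n, y = c * (a : ZMod n)}
    ⟨0, by ring⟩
    (fun {x y} hx hy => by
      obtain ⟨c1, rfl⟩ := hx; obtain ⟨c2, rfl⟩ := hy; exact ⟨c1 + c2, by ring⟩)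
    (fun {x} hx => by obtain ⟨c, rfl⟩ := hx; exact ⟨-c, by ring⟩)
    (fun {x y} hy => by obtain ⟨c, rfl⟩ := hy; exact ⟨x * c, by ring⟩)
    (fun {x y} hx => by obtain ⟨c, rfl⟩ := hx; exact ⟨c * y, by ring⟩)
  have hxJ : x ∈ J := TwoSidedIdeal.mem_span_iff.1 hx J (by
    intro z hz
    rw [Set.mem_singleton_iff] at hz
    subst hz
    show ∃ c : ZMod n, _ = c * (a : ZMod n)
    exact ⟨1, by ring⟩)
  rw [TwoSidedIdeal.mem_mk'] at hxJ
  obtain ⟨c, hc⟩ : ∃ c : ZMod n, x = c * (a : ZMod n) := hxJ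
  have hcast : ((c.val * a : ℕ) : ZMod n) = ((x.val : ℕ) : ZMod n) := by
    push_cast
    rw [ZMod.natCast_val, ZMod.cast_id, ZMod.natCast_val, ZMod.cast_id, ← hc]
  have hmod : c.val * a ≡ x.val [MOD n] := (ZMod.natCast_eq_natCast_iff _ _ _).1 hcast
  have hdint : (n : ℤ) ∣ (x.val : ℤ) - (c.val * a : ℕ) := hmod.dvd
  have h1 : (a : ℤ) ∣ (x.val : ℤ) := by
    have h2 : (a : ℤ) ∣ (x.val : ℤ) - (c.val * a : ℕ) :=
      dvd_trans (Int.natCast_dvd_natCast.2 han) hdint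
    have h3 : (a : ℤ) ∣ ((c.val * a : ℕ) : ℤ) := by push_cast; exact dvd_mul_left _ _
    have h4 := dvd_add h2 h3
    simpa using h4
  exact_mod_cast h1

/-- If `a ∣ b` then `(b : ZMod n)` lies in the span of `(a : ZMod n)`. -/
lemma aux_dvd_mem_span {n : ℕ} {a b : ℕ} (h : a ∣ b) :
    ((b : ℕ) : ZMod n) ∈ TwoSidedIdeal.span {((a : ℕ) : ZMod n)} := by
  obtain ⟨t, rfl⟩ := h
  push_cast
  exact TwoSidedIdeal.mul_mem_right _ _ _ (TwoSidedIdeal.subset_span (Set.mem_singleton _))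

/-- Any two-sided ideal of `ZMod n` containing `x` contains `gcd x.val n`. -/
lemma aux_gcd_mem {n : ℕ} [NeZero n] (I : TwoSidedIdeal (ZMod n)) (x : ZMod n)
    (hx : x ∈ I) : ((Nat.gcd x.val n : ℕ) : ZMod n) ∈ I := by
  have h := Nat.gcd_eq_gcd_ab x.val n
  have key : ((Nat.gcd x.val n : ℕ) : ZMod n) = ((Nat.gcdA x.val n : ℤ) : ZMod n) * x := by
    have h2 := congrArg (fun z : ℤ => (z : ZMod n)) h
    push_cast at h2
    rw [h2, ZMod.natCast_val, ZMod.cast_id, ZMod.natCast_self]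
    ring
  rw [key]
  exact TwoSidedIdeal.mul_mem_left _ _ _ hx

end Aux

/-- In Z/nZ with n = ∏ pᵢ^{mᵢ} (distinct primes pᵢ, mᵢ ≥ 1), the ideal generated by
∏ pᵢ^{m'ᵢ} (with m'ᵢ ≤ mᵢ) is essential iff m'ᵢ < mᵢ for all i. -/
theorem stmt10 (k : ℕ) (p m m' : Fin k → ℕ)
    (hp : ∀ i, (p i).Prime) (hinj : Function.Injective p)
    (hm : ∀ i, 1 ≤ m i) (hm' : ∀ i, m' i ≤ m i)
    (n : ℕ) (hn : n = ∏ i, p i ^ m i) (hn2 : 2 ≤ n) :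
    IsEssentialIdeal (TwoSidedIdeal.span {((∏ i, p i ^ m' i : ℕ) : ZMod n)}) ↔
      ∀ i, m' i < m i := by
  haveI : NeZero n := ⟨by omega⟩
  obtain ⟨r, hr⟩ : ∃ r : Fin k → ℕ, ∀ j, r j = ∏ l ∈ Finset.univ.erase j, p l ^ m l :=
    ⟨_, fun _ => rfl⟩
  obtain ⟨e, he⟩ : ∃ e : Fin k → ℕ, ∀ j, e j = p j ^ (m j - 1) * r j := ⟨_, fun _ => rfl⟩
  set d : ℕ := ∏ i, p i ^ m' i with hd
  have hnj : ∀ j, n = p j ^ m j * r j := fun j => by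
    rw [hn, ← Finset.mul_prod_erase _ _ (Finset.mem_univ j), hr]
  have hpr : ∀ j, ¬ p j ∣ r j := by
    intro j hdvd
    rw [hr] at hdvd
    obtain ⟨l, hl, hpl⟩ := (Prime.dvd_finset_prod_iff (hp j).prime _).1 hdvd
    have hpeq := (Nat.prime_dvd_prime_iff_eq (hp j) (hp l)).1 ((hp j).dvd_of_dvd_pow hpl)
    exact (Finset.mem_erase.1 hl).1 (hinj hpeq).symm
  have hne : ∀ j, n = p j * e j := by
    intro j
    rw [hnj j, he j, ← mul_assoc]
    congr 1
    conv_lhs => rw [show m j = (m j - 1) + 1 from by have := hm j; omega]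
    rw [pow_succ, mul_comm]
  have hepos : ∀ j, 0 < e j := by
    intro j
    rcases Nat.eq_zero_or_pos (e j) with h | h
    · exfalso; have := hne j; rw [h, mul_zero] at this; omega
    · exact h
  have helt : ∀ j, e j < n := by
    intro j
    have h2 := (hp j).two_le
    have h3 := hne j
    have := hepos j
    nlinarith
  have hecast : ∀ j, ((e j : ℕ) : ZMod n) ≠ 0 := by
    intro j h
    rw [ZMod.natCast_eq_zero_iff] at h
    have := Nat.le_of_dvd (hepos j) h
    have := helt j
    omega
  have hdn : d ∣ n := by
    rw [hd, hn]
    exact Finset.prod_dvd_prod_of_dvd _ _ (fun i _ => pow_dvd_pow _ (hm' i))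
  have hen : ∀ j, e j ∣ n := fun j => ⟨p j, by rw [hne j]; ring⟩
  constructor
  · -- essential → all strict
    intro hess i
    by_contra hlt
    have hmi : m' i = m i := le_antisymm (hm' i) (by omega)
    have hIne : TwoSidedIdeal.span {((e i : ℕ) : ZMod n)} ≠ ⊥ := by
      intro h
      exact hecast i ((TwoSidedIdeal.mem_bot _).1
        (h ▸ TwoSidedIdeal.subset_span (Set.mem_singleton _)))
    apply hess _ hIne
    refine eq_bot_iff.2 (TwoSidedIdeal.le_iff.2 fun x hx => ?_)
    rw [SetLike.mem_coe] at hx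
    obtain ⟨h1, h2⟩ := (TwoSidedIdeal.mem_inf _).1 hx
    have hd1 : d ∣ x.val := aux_span_dvd_val hdn x h1
    have he1 : e i ∣ x.val := aux_span_dvd_val (hen i) x h2
    have hpnd : p i ^ m i ∣ d := by
      rw [hd, ← Finset.mul_prod_erase _ _ (Finset.mem_univ i), hmi]
      exact Dvd.intro _ rfl
    have hrd : r i ∣ e i := by rw [he i]; exact Dvd.intro_left _ rfl
    have hcop : Nat.Coprime (p i ^ m i) (r i) :=
      Nat.Coprime.pow_left _ (((hp i).coprime_iff_not_dvd).2 (hpr i))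
    have hnx : n ∣ x.val :=
      dvd_trans (dvd_of_eq (hnj i))
        (hcop.mul_dvd_of_dvd_of_dvd (hpnd.trans hd1) (hrd.trans he1))
    have hvlt := ZMod.val_lt x
    have hx0 : x.val = 0 := by
      rcases Nat.eq_zero_or_pos x.val with h | h
      · exact h
      · exact absurd (Nat.le_of_dvd h hnx) (by omega)
    have : x = 0 := (ZMod.val_eq_zero x).1 hx0
    rw [this]
    exact SetLike.mem_coe.2 (TwoSidedIdeal.zero_mem _)
  · -- all strict → essential
    intro hall I hI
    have hex : ∃ x : ZMod n, x ∈ I ∧ x ≠ 0 := by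
      by_contra h
      push_neg at h
      apply hI
      refine eq_bot_iff.2 (TwoSidedIdeal.le_iff.2 fun x hx => ?_)
      rw [SetLike.mem_coe] at hx
      rw [h x hx]
      exact SetLike.mem_coe.2 (TwoSidedIdeal.zero_mem _)
    obtain ⟨x, hxI, hx0⟩ := hex
    set g := Nat.gcd x.val n with hg
    have hgI : ((g : ℕ) : ZMod n) ∈ I := aux_gcd_mem I x hxI
    have hgn : g ∣ n := Nat.gcd_dvd_right _ _
    have hxval : x.val ≠ 0 := fun h => hx0 ((ZMod.val_eq_zero x).1 h)
    have hg0 : g ≠ 0 := fun h => hxval (Nat.eq_zero_of_gcd_eq_zero_left h)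
    have hgx : g ∣ x.val := Nat.gcd_dvd_left _ _
    have hglt : g < n :=
      lt_of_le_of_lt (Nat.le_of_dvd (Nat.pos_of_ne_zero hxval) hgx) (ZMod.val_lt x)
    have hj : ∃ j, ¬ p j ^ m j ∣ g := by
      by_contra h
      push_neg at h
      have hng : n ∣ g := by
        rw [hn]
        have hZ : ((∏ i, p i ^ m i : ℕ) : ℤ) ∣ (g : ℤ) := by
          push_cast
          refine Finset.prod_dvd_of_coprime ?_ (fun j _ => by exact_mod_cast h j)
          intro a _ b _ hab
          simp only [Function.onFun]
          exact IsCoprime.pow (Nat.isCoprime_iff_coprime.2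
            ((Nat.coprime_primes (hp a) (hp b)).2 (fun hpe => hab (hinj hpe))))
        exact_mod_cast hZ
      have := Nat.le_of_dvd (Nat.pos_of_ne_zero hg0) hng
      omega
    obtain ⟨j, hj⟩ := hj
    have hfac : p j ^ g.factorization (p j) * (g / p j ^ g.factorization (p j)) = g :=
      Nat.ordProj_mul_ordCompl_eq_self g (p j)
    have ha : g.factorization (p j) ≤ m j - 1 := by
      have h2 : ¬ m j ≤ g.factorization (p j) :=
        fun hle => hj (((hp j).pow_dvd_iff_le_factorization hg0).2 hle)
      have := hm j
      omega
    have hcdvd : (g / p j ^ g.factorization (p j)) ∣ r j := by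
      have h1 : (g / p j ^ g.factorization (p j)) ∣ n :=
        (Nat.ordCompl_dvd g (p j)).trans hgn
      have hnd : ¬ p j ∣ (g / p j ^ g.factorization (p j)) :=
        Nat.not_dvd_ordCompl (hp j) hg0
      have hcop2 : Nat.Coprime (g / p j ^ g.factorization (p j)) (p j ^ m j) :=
        Nat.Coprime.pow_right _ (Nat.coprime_comm.1 (((hp j).coprime_iff_not_dvd).2 hnd))
      refine hcop2.dvd_of_dvd_mul_left ?_
      rw [← hnj j]
      exact h1
    have hge : g ∣ e j := by
      rw [he j, ← hfac]
      exact mul_dvd_mul (pow_dvd_pow _ ha) hcdvd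
    have hde : d ∣ e j := by
      rw [hd, ← Finset.mul_prod_erase _ _ (Finset.mem_univ j), he j]
      refine mul_dvd_mul (pow_dvd_pow _ (Nat.le_sub_one_of_lt (hall j))) ?_
      rw [hr]
      exact Finset.prod_dvd_prod_of_dvd _ _ (fun l _ => pow_dvd_pow _ (hm' l))
    have hmem1 : ((e j : ℕ) : ZMod n) ∈ TwoSidedIdeal.span {((d : ℕ) : ZMod n)} :=
      aux_dvd_mem_span hde
    have hmem2 : ((e j : ℕ) : ZMod n) ∈ I := by
      obtain ⟨t, ht⟩ := hge
      rw [ht]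
      push_cast
      exact TwoSidedIdeal.mul_mem_right _ _ _ hgI
    intro hbot
    have hmem : ((e j : ℕ) : ZMod n) ∈
        TwoSidedIdeal.span {((d : ℕ) : ZMod n)} ⊓ I :=
      (TwoSidedIdeal.mem_inf _).2 ⟨hmem1, hmem2⟩
    rw [hbot] at hmem
    exact hecast j ((TwoSidedIdeal.mem_bot _).1 hmem)
end

section
/- In a unital ring R with a nontrivial ideal decomposition R = I ⊕ J (I and J nonzero ideals with I ∩ J = 0 and I + J = R), the ideal I is an M-ideal if and only if I is relatively irreducible. -/
lemma exists_ne_zero_of_ne_bot {S : Type*} [NonUnitalNonAssocRing S]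
    {K : TwoSidedIdeal S} (h : K ≠ ⊥) : ∃ x ∈ K, x ≠ 0 := by
  by_contra hc
  push_neg at hc
  exact h (eq_bot_iff.2 fun x hx => (TwoSidedIdeal.mem_bot _).2 (hc x hx))

lemma ne_bot_of_mem_ne_zero {S : Type*} [NonUnitalNonAssocRing S]
    {K : TwoSidedIdeal S} {x : S} (hx : x ∈ K) (h0 : x ≠ 0) : K ≠ ⊥ := by
  rintro rfl
  exact h0 ((TwoSidedIdeal.mem_bot _).1 hx)

/-- In a unital ring with a nontrivial decomposition R = I ⊕ J, the ideal I is an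
M-ideal iff it is relatively irreducible. -/
theorem stmt12 {R : Type*} [Ring R] (I J : TwoSidedIdeal R)
    (hinf : I ⊓ J = ⊥) (hsup : I ⊔ J = ⊤) (hI : I ≠ ⊥) (hJ : J ≠ ⊥) :
    IsMIdeal I ↔ IsRelIrreducible I := by
  constructor
  · -- M-ideal → rel irreducible
    intro hM A B hAI hBI hAB
    by_contra hc
    push_neg at hc
    obtain ⟨hA, hB⟩ := hc
    -- key: for C ≤ I, x ∈ I ∩ (C ⊔ J) → x ∈ C
    have key : ∀ (C : TwoSidedIdeal R), C ≤ I → ∀ x : R, x ∈ I → x ∈ C ⊔ J → x ∈ C := by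
      intro C hCI x hxI hx
      obtain ⟨y, hy, z, hz, rfl⟩ := (TwoSidedIdeal.mem_sup).1 hx
      have hzI : z ∈ I := by
        have := I.sub_mem hxI (hCI hy)
        simpa using this
      have : z ∈ I ⊓ J := (TwoSidedIdeal.mem_inf _).2 ⟨hzI, hz⟩
      rw [hinf] at this
      rw [(TwoSidedIdeal.mem_bot _).1 this, add_zero]
      exact hy
    have hA' : A ⊔ J ≠ ⊥ := fun h => hJ (eq_bot_iff.1 h |>.trans' le_sup_right |> le_bot_iff.1)
    have hB' : B ⊔ J ≠ ⊥ := fun h => hJ (eq_bot_iff.1 h |>.trans' le_sup_right |> le_bot_iff.1)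
    have hinter : (A ⊔ J) ⊓ (B ⊔ J) ≠ ⊥ := by
      intro h
      exact hJ (le_bot_iff.1 (h ▸ le_inf le_sup_right le_sup_right))
    have hIA : I ⊓ (A ⊔ J) ≠ ⊥ := by
      intro h
      exact hA (le_bot_iff.1 (h ▸ le_inf hAI le_sup_left))
    have hIB : I ⊓ (B ⊔ J) ≠ ⊥ := by
      intro h
      exact hB (le_bot_iff.1 (h ▸ le_inf hBI le_sup_left))
    apply hM (A ⊔ J) (B ⊔ J) hA' hB' hinter hIA hIB
    rw [eq_bot_iff]
    intro x hx
    obtain ⟨hxI, hx'⟩ := (TwoSidedIdeal.mem_inf _).1 hx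
    obtain ⟨hx1, hx2⟩ := (TwoSidedIdeal.mem_inf _).1 hx'
    have hxA := key A hAI x hxI hx1
    have hxB := key B hBI x hxI hx2
    have : x ∈ A ⊓ B := (TwoSidedIdeal.mem_inf _).2 ⟨hxA, hxB⟩
    rwa [hAB] at this
  · -- rel irreducible → M-ideal
    intro hIrr I₁ I₂ _ _ _ h1 h2 h
    rcases hIrr (I ⊓ I₁) (I ⊓ I₂) inf_le_left inf_le_left (by
      rw [eq_bot_iff] at h ⊢
      intro x hx
      obtain ⟨h1', h2'⟩ := (TwoSidedIdeal.mem_inf _).1 hx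
      obtain ⟨hxI, hx1⟩ := (TwoSidedIdeal.mem_inf _).1 h1'
      obtain ⟨-, hx2⟩ := (TwoSidedIdeal.mem_inf _).1 h2'
      exact h ((TwoSidedIdeal.mem_inf _).2 ⟨hxI, (TwoSidedIdeal.mem_inf _).2 ⟨hx1, hx2⟩⟩)) with h' | h'
    · exact h1 h'
    · exact h2 h'
end

section
/- Let R = R_1 × R_2 be a direct product of rings, and let I = I_1 × I_2 where I_1, I_2 are nonzero ideals of R_1, R_2 respectively. Then I is an M-ideal of R if and only if I_1 is essential in R_1 and I_2 is essential in R_2. -/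
open TwoSidedIdeal

/-- The product ideal I₁ × I₂ in R₁ × R₂. -/
def prodTSI {R₁ R₂ : Type*} [Ring R₁] [Ring R₂]
    (I₁ : TwoSidedIdeal R₁) (I₂ : TwoSidedIdeal R₂) : TwoSidedIdeal (R₁ × R₂) :=
  TwoSidedIdeal.comap (RingHom.fst R₁ R₂) I₁ ⊓ TwoSidedIdeal.comap (RingHom.snd R₁ R₂) I₂

section Helpers

lemma tsi_ne_bot_iff {S : Type*} [NonUnitalNonAssocRing S] (I : TwoSidedIdeal S) :
    I ≠ ⊥ ↔ ∃ x ∈ I, x ≠ 0 := by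
  constructor
  · intro h
    by_contra hc
    push_neg at hc
    exact h (eq_bot_iff.2 fun x hx => (TwoSidedIdeal.mem_bot _).2 (hc x hx))
  · rintro ⟨x, hx, hx0⟩ rfl
    exact hx0 ((TwoSidedIdeal.mem_bot _).1 hx)

lemma mem_prodTSI {R₁ R₂ : Type*} [Ring R₁] [Ring R₂]
    {I₁ : TwoSidedIdeal R₁} {I₂ : TwoSidedIdeal R₂} {x : R₁ × R₂} :
    x ∈ prodTSI I₁ I₂ ↔ x.1 ∈ I₁ ∧ x.2 ∈ I₂ := by
  simp [prodTSI, TwoSidedIdeal.mem_inf, TwoSidedIdeal.mem_comap]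

/-- The inclusion `R₁ → R₁ × R₂` as a non-unital ring hom. -/
def inlH (R₁ R₂ : Type*) [Ring R₁] [Ring R₂] : R₁ →ₙ+* R₁ × R₂ :=
  (NonUnitalRingHom.id R₁).prod 0

/-- The inclusion `R₂ → R₁ × R₂` as a non-unital ring hom. -/
def inrH (R₁ R₂ : Type*) [Ring R₁] [Ring R₂] : R₂ →ₙ+* R₁ × R₂ :=
  (0 : R₂ →ₙ+* R₁).prod (NonUnitalRingHom.id R₂)

lemma inlH_apply {R₁ R₂ : Type*} [Ring R₁] [Ring R₂] (x : R₁) :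
    inlH R₁ R₂ x = (x, 0) := rfl

lemma inrH_apply {R₁ R₂ : Type*} [Ring R₁] [Ring R₂] (x : R₂) :
    inrH R₁ R₂ x = (0, x) := rfl

end Helpers

/-- For nonzero ideals I₁ ⊆ R₁ and I₂ ⊆ R₂, the ideal I₁ × I₂ is an M-ideal of
R₁ × R₂ iff I₁ is essential in R₁ and I₂ is essential in R₂. -/
theorem stmt13 {R₁ R₂ : Type*} [Ring R₁] [Ring R₂]
    (I₁ : TwoSidedIdeal R₁) (I₂ : TwoSidedIdeal R₂) (h₁ : I₁ ≠ ⊥) (h₂ : I₂ ≠ ⊥) :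
    IsMIdeal (prodTSI I₁ I₂) ↔ IsEssentialIdeal I₁ ∧ IsEssentialIdeal I₂ := by
  obtain ⟨a₁, ha₁, ha₁0⟩ := (tsi_ne_bot_iff I₁).1 h₁
  obtain ⟨a₂, ha₂, ha₂0⟩ := (tsi_ne_bot_iff I₂).1 h₂
  constructor
  · intro hM
    constructor
    · -- I₁ is essential
      intro K hK
      obtain ⟨k, hk, hk0⟩ := (tsi_ne_bot_iff K).1 hK
      by_contra hIK
      have hbot : I₁ ⊓ K = ⊥ := hIK
      have key := hM (prodTSI (I₁ ⊔ K) ⊥) (prodTSI K I₂)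
        ((tsi_ne_bot_iff _).2 ⟨(a₁, 0), mem_prodTSI.2
          ⟨TwoSidedIdeal.mem_sup_left ha₁, (⊥ : TwoSidedIdeal R₂).zero_mem⟩,
          by simp [ha₁0]⟩)
        ((tsi_ne_bot_iff _).2 ⟨(k, 0), mem_prodTSI.2 ⟨hk, I₂.zero_mem⟩, by simp [hk0]⟩)
        ((tsi_ne_bot_iff _).2 ⟨(k, 0), (TwoSidedIdeal.mem_inf _).2
          ⟨mem_prodTSI.2 ⟨TwoSidedIdeal.mem_sup_right hk, (⊥ : TwoSidedIdeal R₂).zero_mem⟩,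
           mem_prodTSI.2 ⟨hk, I₂.zero_mem⟩⟩, by simp [hk0]⟩)
        ((tsi_ne_bot_iff _).2 ⟨(a₁, 0), (TwoSidedIdeal.mem_inf _).2
          ⟨mem_prodTSI.2 ⟨ha₁, I₂.zero_mem⟩,
           mem_prodTSI.2 ⟨TwoSidedIdeal.mem_sup_left ha₁, (⊥ : TwoSidedIdeal R₂).zero_mem⟩⟩,
          by simp [ha₁0]⟩)
        ((tsi_ne_bot_iff _).2 ⟨(0, a₂), (TwoSidedIdeal.mem_inf _).2
          ⟨mem_prodTSI.2 ⟨I₁.zero_mem, ha₂⟩,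
           mem_prodTSI.2 ⟨K.zero_mem, ha₂⟩⟩, by simp [ha₂0]⟩)
      apply key
      apply eq_bot_iff.2
      rintro ⟨x, y⟩ hx
      rw [TwoSidedIdeal.mem_inf, TwoSidedIdeal.mem_inf] at hx
      obtain ⟨hJ, hA, hB⟩ := hx
      rw [mem_prodTSI] at hJ hA hB
      have hx0 : x = 0 := by
        have : x ∈ I₁ ⊓ K := (TwoSidedIdeal.mem_inf _).2 ⟨hJ.1, hB.1⟩
        rw [hbot] at this
        exact (TwoSidedIdeal.mem_bot _).1 this
      have hy0 : y = 0 := (TwoSidedIdeal.mem_bot _).1 hA.2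
      simp [TwoSidedIdeal.mem_bot, hx0, hy0, Prod.ext_iff]
    · -- I₂ is essential
      intro K hK
      obtain ⟨k, hk, hk0⟩ := (tsi_ne_bot_iff K).1 hK
      by_contra hIK
      have hbot : I₂ ⊓ K = ⊥ := hIK
      have key := hM (prodTSI ⊥ (I₂ ⊔ K)) (prodTSI I₁ K)
        ((tsi_ne_bot_iff _).2 ⟨(0, a₂), mem_prodTSI.2
          ⟨(⊥ : TwoSidedIdeal R₁).zero_mem, TwoSidedIdeal.mem_sup_left ha₂⟩,
          by simp [ha₂0]⟩)
        ((tsi_ne_bot_iff _).2 ⟨(0, k), mem_prodTSI.2 ⟨I₁.zero_mem, hk⟩, by simp [hk0]⟩)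
        ((tsi_ne_bot_iff _).2 ⟨(0, k), (TwoSidedIdeal.mem_inf _).2
          ⟨mem_prodTSI.2 ⟨(⊥ : TwoSidedIdeal R₁).zero_mem, TwoSidedIdeal.mem_sup_right hk⟩,
           mem_prodTSI.2 ⟨I₁.zero_mem, hk⟩⟩, by simp [hk0]⟩)
        ((tsi_ne_bot_iff _).2 ⟨(0, a₂), (TwoSidedIdeal.mem_inf _).2
          ⟨mem_prodTSI.2 ⟨I₁.zero_mem, ha₂⟩,
           mem_prodTSI.2 ⟨(⊥ : TwoSidedIdeal R₁).zero_mem, TwoSidedIdeal.mem_sup_left ha₂⟩⟩,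
          by simp [ha₂0]⟩)
        ((tsi_ne_bot_iff _).2 ⟨(a₁, 0), (TwoSidedIdeal.mem_inf _).2
          ⟨mem_prodTSI.2 ⟨ha₁, I₂.zero_mem⟩,
           mem_prodTSI.2 ⟨ha₁, K.zero_mem⟩⟩, by simp [ha₁0]⟩)
      apply key
      apply eq_bot_iff.2
      rintro ⟨x, y⟩ hx
      rw [TwoSidedIdeal.mem_inf, TwoSidedIdeal.mem_inf] at hx
      obtain ⟨hJ, hA, hB⟩ := hx
      rw [mem_prodTSI] at hJ hA hB
      have hy0 : y = 0 := by
        have : y ∈ I₂ ⊓ K := (TwoSidedIdeal.mem_inf _).2 ⟨hJ.2, hB.2⟩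
        rw [hbot] at this
        exact (TwoSidedIdeal.mem_bot _).1 this
      have hx0 : x = 0 := (TwoSidedIdeal.mem_bot _).1 hA.1
      simp [TwoSidedIdeal.mem_bot, hx0, hy0, Prod.ext_iff]
  · -- essential × essential → the product is essential, hence an M-ideal
    rintro ⟨hE₁, hE₂⟩
    have hEss : IsEssentialIdeal (prodTSI I₁ I₂) := by
      intro A hA
      obtain ⟨⟨a, b⟩, hab, hab0⟩ := (tsi_ne_bot_iff A).1 hA
      rcases (by by_contra h; push_neg at h; exact hab0 (Prod.ext h.1 h.2) :
          a ≠ 0 ∨ b ≠ 0) with ha | hb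
      · have h1 : ((a, b) : R₁ × R₂) * (1, 0) ∈ A := A.mul_mem_right _ _ hab
        have h1' : ((a, 0) : R₁ × R₂) ∈ A := by simpa using h1
        have hA₁ : TwoSidedIdeal.comap (inlH R₁ R₂) A ≠ ⊥ :=
          (tsi_ne_bot_iff _).2 ⟨a, (TwoSidedIdeal.mem_comap _).2 (by simpa [inlH_apply] using h1'),
            ha⟩
        obtain ⟨x, hx, hx0⟩ := (tsi_ne_bot_iff _).1 (hE₁ _ hA₁)
        rw [TwoSidedIdeal.mem_inf] at hx
        refine (tsi_ne_bot_iff _).2 ⟨(x, 0), (TwoSidedIdeal.mem_inf _).2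
          ⟨mem_prodTSI.2 ⟨hx.1, I₂.zero_mem⟩,
           by simpa [inlH_apply] using (TwoSidedIdeal.mem_comap _).1 hx.2⟩, by simp [hx0]⟩
      · have h1 : ((a, b) : R₁ × R₂) * (0, 1) ∈ A := A.mul_mem_right _ _ hab
        have h1' : ((0, b) : R₁ × R₂) ∈ A := by simpa using h1
        have hA₂ : TwoSidedIdeal.comap (inrH R₁ R₂) A ≠ ⊥ :=
          (tsi_ne_bot_iff _).2 ⟨b, (TwoSidedIdeal.mem_comap _).2 (by simpa [inrH_apply] using h1'),
            hb⟩
        obtain ⟨x, hx, hx0⟩ := (tsi_ne_bot_iff _).1 (hE₂ _ hA₂)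
        rw [TwoSidedIdeal.mem_inf] at hx
        refine (tsi_ne_bot_iff _).2 ⟨(0, x), (TwoSidedIdeal.mem_inf _).2
          ⟨mem_prodTSI.2 ⟨I₁.zero_mem, hx.1⟩,
           by simpa [inrH_apply] using (TwoSidedIdeal.mem_comap _).1 hx.2⟩, by simp [hx0]⟩
    intro A B _ _ hAB _ _
    exact hEss _ hAB
end

section
/- If I is a nonzero proper ideal of a ring R which is not a direct summand of R (i.e., there is no ideal J with I ∩ J = 0 and I + J = R), then there exists a proper M-ideal K of R with I ⊆ K. -/
private lemma tsi_eq_bot_iff {R : Type*} [Ring R] (I : TwoSidedIdeal R) :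
    I = ⊥ ↔ ∀ x ∈ I, x = 0 := by
  constructor
  · rintro rfl x hx; exact (TwoSidedIdeal.mem_bot R).1 hx
  · intro h
    refine le_antisymm (fun x hx => (TwoSidedIdeal.mem_bot R).2 (h x hx)) bot_le

/-- If I is a nonzero proper ideal of a unital ring R which is not a direct summand,
then there is a proper M-ideal K of R containing I. -/
theorem stmt15 {R : Type*} [Ring R] (I : TwoSidedIdeal R)
    (hne : I ≠ ⊥) (hpr : I ≠ ⊤)
    (hds : ¬ ∃ J : TwoSidedIdeal R, I ⊓ J = ⊥ ∧ I ⊔ J = ⊤) :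
    ∃ K : TwoSidedIdeal R, K ≠ ⊤ ∧ IsMIdeal K ∧ I ≤ K := by
  -- Zorn: pick J maximal with I ⊓ J = ⊥
  set s : Set (TwoSidedIdeal R) := {J | I ⊓ J = ⊥} with hs
  obtain ⟨J, -, hJs, hJmax⟩ := zorn_le_nonempty₀ s (fun c hcs hc y hy => by
      -- upper bound: the union of the chain, which is an ideal
      refine ⟨TwoSidedIdeal.mk' (⋃ J ∈ c, (J : Set R)) ?_ ?_ ?_ ?_ ?_, ?_, ?_⟩
      · exact Set.mem_biUnion hy (TwoSidedIdeal.zero_mem y)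
      · rintro a b ha hb
        simp only [Set.mem_iUnion] at ha hb ⊢
        obtain ⟨A, hA, ha⟩ := ha
        obtain ⟨B, hB, hb⟩ := hb
        rcases hc.total hA hB with h | h
        · exact ⟨B, hB, TwoSidedIdeal.add_mem _ (h ha) hb⟩
        · exact ⟨A, hA, TwoSidedIdeal.add_mem _ ha (h hb)⟩
      · rintro a ha
        simp only [Set.mem_iUnion] at ha ⊢
        obtain ⟨A, hA, ha⟩ := ha
        exact ⟨A, hA, TwoSidedIdeal.neg_mem _ ha⟩
      · rintro r a ha
        simp only [Set.mem_iUnion] at ha ⊢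
        obtain ⟨A, hA, ha⟩ := ha
        exact ⟨A, hA, TwoSidedIdeal.mul_mem_left _ _ _ ha⟩
      · rintro r a ha
        simp only [Set.mem_iUnion] at ha ⊢
        obtain ⟨A, hA, ha⟩ := ha
        exact ⟨A, hA, TwoSidedIdeal.mul_mem_right _ _ _ ha⟩
      · -- membership in s
        rw [hs, Set.mem_setOf_eq, tsi_eq_bot_iff]
        intro x hx
        rw [TwoSidedIdeal.mem_inf R] at hx
        obtain ⟨hxI, hxU⟩ := hx
        rw [TwoSidedIdeal.mem_mk'] at hxU
        simp only [Set.mem_iUnion] at hxU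
        obtain ⟨A, hA, hxA⟩ := hxU
        have : x ∈ I ⊓ A := (TwoSidedIdeal.mem_inf R).2 ⟨hxI, hxA⟩
        rw [hcs hA] at this
        exact (TwoSidedIdeal.mem_bot R).1 this
      · -- upper bound
        intro z hz x hx
        rw [TwoSidedIdeal.mem_mk']
        exact Set.mem_biUnion hz hx)
    ⊥ (by simp [hs])
  refine ⟨I ⊔ J, ?_, ?_, le_sup_left⟩
  · intro h
    exact hds ⟨J, hJs, h⟩
  · -- I ⊔ J is essential, hence an M-ideal
    have hess : IsEssentialIdeal (I ⊔ J) := by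
      intro A hA hbot
      apply hA
      -- first: I ⊓ (J ⊔ A) = ⊥
      have hJA : J ⊔ A ∈ s := by
        rw [hs, Set.mem_setOf_eq, tsi_eq_bot_iff]
        intro x hx
        rw [TwoSidedIdeal.mem_inf R] at hx
        obtain ⟨hxI, hxJA⟩ := hx
        rw [TwoSidedIdeal.mem_sup] at hxJA
        obtain ⟨j, hj, a, ha, rfl⟩ := hxJA
        have haK : a ∈ (I ⊔ J) ⊓ A := by
          rw [TwoSidedIdeal.mem_inf R]
          refine ⟨?_, ha⟩
          have : a = (j + a) + (-j) := by abel
          rw [this]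
          exact TwoSidedIdeal.add_mem _ (TwoSidedIdeal.mem_sup_left hxI)
            (TwoSidedIdeal.mem_sup_right (TwoSidedIdeal.neg_mem _ hj))
        rw [hbot] at haK
        have ha0 : a = 0 := (TwoSidedIdeal.mem_bot R).1 haK
        rw [ha0, add_zero] at hxI ⊢
        have : j ∈ I ⊓ J := (TwoSidedIdeal.mem_inf R).2 ⟨hxI, hj⟩
        rw [hJs] at this
        exact (TwoSidedIdeal.mem_bot R).1 this
      have hJA' : J ⊔ A = J := le_antisymm (hJmax hJA le_sup_left) le_sup_left
      have hAJ : A ≤ J := le_sup_right.trans hJA'.le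
      rw [tsi_eq_bot_iff]
      intro x hx
      have : x ∈ (I ⊔ J) ⊓ A := (TwoSidedIdeal.mem_inf R).2
        ⟨TwoSidedIdeal.mem_sup_right (hAJ hx), hx⟩
      rw [hbot] at this
      exact (TwoSidedIdeal.mem_bot R).1 this
    intro I₁ I₂ _ _ h12 _ _
    exact hess _ h12
end

section
/- If N and N' are ideals of a ring R such that every ideal of N' is an ideal of R, N is an M-ideal of the ring N', and N' is an M-ideal of R, then N is an M-ideal of R. -/
lemma ne_bot_iff {S : Type*} [NonUnitalNonAssocRing S] (I : TwoSidedIdeal S) :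
    I ≠ ⊥ ↔ ∃ x, x ∈ I ∧ x ≠ 0 := by
  constructor
  · intro h
    by_contra hc
    push_neg at hc
    apply h
    ext x
    simp only [TwoSidedIdeal.mem_bot]
    exact ⟨fun hx => hc x hx, fun hx => hx ▸ I.zero_mem⟩
  · rintro ⟨x, hx, hx0⟩ h
    rw [h, TwoSidedIdeal.mem_bot] at hx
    exact hx0 hx

/-- If every ideal of the ring N' is an ideal of R, N corresponds to an M-ideal of the
ring N', and N' is an M-ideal of R, then N is an M-ideal of R. -/
theorem stmt18 {R : Type*} [NonUnitalRing R] (N N' : TwoSidedIdeal R) (hNN' : N ≤ N')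
    (hideal : ∀ A : TwoSidedIdeal N', ∃ A' : TwoSidedIdeal R,
      (Subtype.val '' (A : Set N') : Set R) = (A' : Set R))
    (N₀ : TwoSidedIdeal N')
    (hN₀ : (Subtype.val '' (N₀ : Set N') : Set R) = (N : Set R))
    (h₁ : IsMIdeal N₀) (h₂ : IsMIdeal N') : IsMIdeal N := by
  intro I₁ I₂ hI₁ hI₂ hI₁₂ hNI₁ hNI₂
  -- membership transfer via hN₀
  have hmemN : ∀ x : N', x ∈ N₀ ↔ (x : R) ∈ N := by
    intro x
    constructor
    · intro hx
      have : (x : R) ∈ (Subtype.val '' (N₀ : Set N') : Set R) := ⟨x, hx, rfl⟩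
      rwa [hN₀] at this
    · intro hx
      have : (x : R) ∈ (Subtype.val '' (N₀ : Set N') : Set R) := by rw [hN₀]; exact hx
      obtain ⟨y, hy, hyx⟩ := this
      rwa [show x = y from Subtype.ext hyx.symm]
  -- pulled back ideals in N'
  have mkA : ∀ I : TwoSidedIdeal R, ∃ A : TwoSidedIdeal N', ∀ x : N', x ∈ A ↔ (x : R) ∈ I := by
    intro I
    refine ⟨TwoSidedIdeal.mk' {x : N' | (x : R) ∈ I} I.zero_mem
      (fun hx hy => I.add_mem hx hy) (fun hx => I.neg_mem hx)
      (fun hx => I.mul_mem_left _ _ hx) (fun hx => I.mul_mem_right _ _ hx), ?_⟩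
    intro x
    rw [TwoSidedIdeal.mem_mk']
    · rfl
    all_goals intros; first
      | exact I.zero_mem
      | exact I.add_mem ‹_› ‹_›
      | exact I.neg_mem _ ‹_›
      | exact I.mul_mem_left _ _ ‹_›
      | exact I.mul_mem_right _ _ ‹_›
  obtain ⟨A₁, hA₁⟩ := mkA I₁
  obtain ⟨A₂, hA₂⟩ := mkA I₂
  -- N' ⊓ I₁ ⊓ I₂ ≠ ⊥ by h₂
  have hN'I₁ : N' ⊓ I₁ ≠ ⊥ := by
    obtain ⟨x, ⟨hx1, hx2⟩, hx0⟩ := (ne_bot_iff _).mp hNI₁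
    exact (ne_bot_iff _).mpr ⟨x, ⟨hNN' hx1, hx2⟩, hx0⟩
  have hN'I₂ : N' ⊓ I₂ ≠ ⊥ := by
    obtain ⟨x, ⟨hx1, hx2⟩, hx0⟩ := (ne_bot_iff _).mp hNI₂
    exact (ne_bot_iff _).mpr ⟨x, ⟨hNN' hx1, hx2⟩, hx0⟩
  have key := h₂ I₁ I₂ hI₁ hI₂ hI₁₂ hN'I₁ hN'I₂
  -- translate hypotheses to N'
  have val_ne : ∀ (x : N'), x ≠ 0 → (x : R) ≠ 0 := by
    intro x hx h
    exact hx (Subtype.ext h)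
  have hA₁b : A₁ ≠ ⊥ := by
    obtain ⟨x, ⟨hx1, hx2⟩, hx0⟩ := (ne_bot_iff _).mp hN'I₁
    refine (ne_bot_iff _).mpr ⟨⟨x, hx1⟩, (hA₁ _).mpr hx2, ?_⟩
    intro h; exact hx0 (congrArg Subtype.val h)
  have hA₂b : A₂ ≠ ⊥ := by
    obtain ⟨x, ⟨hx1, hx2⟩, hx0⟩ := (ne_bot_iff _).mp hN'I₂
    refine (ne_bot_iff _).mpr ⟨⟨x, hx1⟩, (hA₂ _).mpr hx2, ?_⟩
    intro h; exact hx0 (congrArg Subtype.val h)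
  have hA₁₂b : A₁ ⊓ A₂ ≠ ⊥ := by
    obtain ⟨x, ⟨hx1, hx2, hx3⟩, hx0⟩ := (ne_bot_iff _).mp key
    refine (ne_bot_iff _).mpr ⟨⟨x, hx1⟩, ⟨(hA₁ _).mpr hx2, (hA₂ _).mpr hx3⟩, ?_⟩
    intro h; exact hx0 (congrArg Subtype.val h)
  have hN₀A₁ : N₀ ⊓ A₁ ≠ ⊥ := by
    obtain ⟨x, ⟨hx1, hx2⟩, hx0⟩ := (ne_bot_iff _).mp hNI₁
    refine (ne_bot_iff _).mpr ⟨⟨x, hNN' hx1⟩, ⟨(hmemN _).mpr hx1, (hA₁ _).mpr hx2⟩, ?_⟩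
    intro h; exact hx0 (congrArg Subtype.val h)
  have hN₀A₂ : N₀ ⊓ A₂ ≠ ⊥ := by
    obtain ⟨x, ⟨hx1, hx2⟩, hx0⟩ := (ne_bot_iff _).mp hNI₂
    refine (ne_bot_iff _).mpr ⟨⟨x, hNN' hx1⟩, ⟨(hmemN _).mpr hx1, (hA₂ _).mpr hx2⟩, ?_⟩
    intro h; exact hx0 (congrArg Subtype.val h)
  have final := h₁ A₁ A₂ hA₁b hA₂b hA₁₂b hN₀A₁ hN₀A₂
  obtain ⟨x, ⟨hx1, hx2, hx3⟩, hx0⟩ := (ne_bot_iff _).mp final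
  exact (ne_bot_iff _).mpr ⟨(x : R), ⟨(hmemN _).mp hx1, (hA₁ _).mp hx2, (hA₂ _).mp hx3⟩,
    val_ne x hx0⟩
end

section
/- If N and Q are ideals of a ring R with N ∩ Q = 0, then there exists an ideal N' of R containing Q such that N ∩ N' = 0 and N + N' is an M-ideal of R; in particular, every ideal of R has an M-complement. -/
/-- If N and Q are ideals with N ⊓ Q = 0, then N has an M-complement containing Q:
an ideal N' ⊇ Q with N ⊓ N' = 0 and N ⊔ N' an M-ideal of R. -/
theorem stmt19 {R : Type*} [Ring R] (N Q : TwoSidedIdeal R) (h : N ⊓ Q = ⊥) :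
    ∃ N' : TwoSidedIdeal R, Q ≤ N' ∧ N ⊓ N' = ⊥ ∧ IsMIdeal (N ⊔ N') := by
  set S : Set (TwoSidedIdeal R) := {K | Q ≤ K ∧ N ⊓ K = ⊥} with hS
  obtain ⟨M, hQM, hMmax⟩ : ∃ M, Q ≤ M ∧ Maximal (· ∈ S) M := by
    refine zorn_le_nonempty₀ S ?_ Q ⟨le_rfl, h⟩
    intro c hcS hchain y hy
    have hzero : (0:R) ∈ ⋃ I ∈ c, (I : Set R) :=
      Set.mem_biUnion hy (TwoSidedIdeal.zero_mem y)
    have hadd : ∀ {a b : R}, a ∈ ⋃ I ∈ c, (I : Set R) → b ∈ ⋃ I ∈ c, (I : Set R) →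
        a + b ∈ ⋃ I ∈ c, (I : Set R) := by
      rintro a b ha hb
      simp only [Set.mem_iUnion] at ha hb ⊢
      obtain ⟨I, hI, haI⟩ := ha
      obtain ⟨J, hJ, hbJ⟩ := hb
      rcases hchain.total hI hJ with hle | hle
      · exact ⟨J, hJ, J.add_mem (hle haI) hbJ⟩
      · exact ⟨I, hI, I.add_mem haI (hle hbJ)⟩
    have hneg : ∀ {a : R}, a ∈ ⋃ I ∈ c, (I : Set R) → -a ∈ ⋃ I ∈ c, (I : Set R) := by
      rintro a ha
      simp only [Set.mem_iUnion] at ha ⊢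
      obtain ⟨I, hI, haI⟩ := ha
      exact ⟨I, hI, I.neg_mem haI⟩
    have hml : ∀ {r a : R}, a ∈ ⋃ I ∈ c, (I : Set R) → r * a ∈ ⋃ I ∈ c, (I : Set R) := by
      rintro r a ha
      simp only [Set.mem_iUnion] at ha ⊢
      obtain ⟨I, hI, haI⟩ := ha
      exact ⟨I, hI, I.mul_mem_left _ _ haI⟩
    have hmr : ∀ {a r : R}, a ∈ ⋃ I ∈ c, (I : Set R) → a * r ∈ ⋃ I ∈ c, (I : Set R) := by
      rintro a r ha
      simp only [Set.mem_iUnion] at ha ⊢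
      obtain ⟨I, hI, haI⟩ := ha
      exact ⟨I, hI, I.mul_mem_right _ _ haI⟩
    set U : TwoSidedIdeal R := TwoSidedIdeal.mk' (⋃ I ∈ c, (I : Set R)) hzero hadd hneg hml hmr
      with hU
    have hmemU : ∀ x : R, x ∈ U ↔ x ∈ ⋃ I ∈ c, (I : Set R) :=
      TwoSidedIdeal.mem_mk' _ hzero hadd hneg hml hmr
    refine ⟨U, ⟨?_, ?_⟩, ?_⟩
    · intro x hx
      exact (hmemU x).mpr (Set.mem_biUnion hy ((hcS hy).1 hx))
    · rw [eq_bot_iff]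
      rintro x ⟨hxN, hx2⟩
      replace hx2 := (hmemU x).mp hx2
      rw [Set.mem_iUnion] at hx2
      obtain ⟨I, hI2⟩ := hx2
      simp only [Set.mem_iUnion] at hI2
      obtain ⟨hIc, hxI⟩ := hI2
      have : x ∈ N ⊓ I := ⟨hxN, hxI⟩
      rw [(hcS hIc).2] at this
      exact this
    · intro z hz x hx
      exact (hmemU x).mpr (Set.mem_biUnion hz hx)
  refine ⟨M, hQM, hMmax.prop.2, ?_⟩
  -- N ⊔ M is essential, hence an M-ideal
  have hess : ∀ I : TwoSidedIdeal R, I ≠ ⊥ → (N ⊔ M) ⊓ I ≠ ⊥ := by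
    intro I hI hcon
    apply hI
    -- show N ⊓ (M ⊔ I) = ⊥, so by maximality M ⊔ I = M, i.e. I ≤ M
    have hkey : N ⊓ (M ⊔ I) = ⊥ := by
      rw [eq_bot_iff]
      rintro x ⟨hxN, hx2⟩
      replace hx2 : x ∈ M ⊔ I := hx2
      rw [TwoSidedIdeal.mem_sup] at hx2
      obtain ⟨m, hm, i, hi, hmi⟩ := hx2
      have hiNM : i ∈ N ⊔ M := by
        have : i = x - m := by rw [← hmi, add_sub_cancel_left]
        rw [this]
        exact (N ⊔ M).sub_mem (TwoSidedIdeal.mem_sup_left hxN)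
          (TwoSidedIdeal.mem_sup_right hm)
      have : i ∈ (N ⊔ M) ⊓ I := ⟨hiNM, hi⟩
      rw [hcon] at this
      rw [TwoSidedIdeal.mem_bot] at this
      subst this
      have hxM : x ∈ M := by rw [← hmi, add_zero]; exact hm
      have : x ∈ N ⊓ M := ⟨hxN, hxM⟩
      rw [hMmax.prop.2] at this
      exact this
    have hMI : M ⊔ I = M :=
      le_antisymm (hMmax.le_of_ge ⟨le_trans hQM le_sup_left, hkey⟩ le_sup_left) le_sup_left
    have hIM : I ≤ M := le_sup_right.trans hMI.le
    rw [eq_bot_iff]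
    intro x hx
    have : x ∈ (N ⊔ M) ⊓ I := ⟨TwoSidedIdeal.mem_sup_right (hIM hx), hx⟩
    rw [hcon] at this
    exact this
  intro I₁ I₂ _ _ h12 _ _
  exact hess (I₁ ⊓ I₂) h12
end
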